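/- arXiv:2101.12606 — 2 statements merged into one kernel-verified Lean document; each statement's English description precedes it below -/
import Mathlib

section
/- (MPC Lyapunov decrease with terminal conditions.) Let X_0 ⊆ X be a terminal constraint set and F : X → ℝ a terminal cost, and define V_T^F(x0) := inf over all controls u admissible for x0 on horizon T whose trajectory additionally satisfies x(T) ∈ X_0, of J_T(x0,u) + F(x(T)). Assume: (a) for every x ∈ X_0 there exists u ∈ U with f(x,u) ∈ X_0 ⊆ X and F(f(x,u)) ≤ F(x) − ℓ(x,u) + ℓ(x^e,u^e); (b) x0 ∈ X admits an optimal control u* for this problem, i.e., u* is admissible for x0 on horizon T with x*(T) ∈ X_0 and J_T(x0,u*) + F(x*(T)) = V_T^F(x0), and the infimum defining V_T^F(f(x0,u*(0))) is over a nonempty set. Then V_T^F(f(x0,u*(0))) ≤ V_T^F(x0) − ℓ(x0,u*(0)) + ℓ(x^e,u^e). -/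
/-- Trajectory of the discrete-time control system `x(t+1) = f(x(t), u(t))`, `x(0) = x0`. -/
def traj {n m : ℕ}
    (f : EuclideanSpace ℝ (Fin n) → EuclideanSpace ℝ (Fin m) → EuclideanSpace ℝ (Fin n))
    (x0 : EuclideanSpace ℝ (Fin n)) (u : ℕ → EuclideanSpace ℝ (Fin m)) :
    ℕ → EuclideanSpace ℝ (Fin n)
  | 0 => x0
  | t + 1 => f (traj f x0 u t) (u t)

/-- A control `u` is admissible for `x0` on horizon `T` if `u(t) ∈ U` for `t < T` and the
trajectory satisfies `x(t) ∈ X` for `t ≤ T`. -/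
def Admissible {n m : ℕ}
    (f : EuclideanSpace ℝ (Fin n) → EuclideanSpace ℝ (Fin m) → EuclideanSpace ℝ (Fin n))
    (X : Set (EuclideanSpace ℝ (Fin n))) (U : Set (EuclideanSpace ℝ (Fin m)))
    (x0 : EuclideanSpace ℝ (Fin n)) (u : ℕ → EuclideanSpace ℝ (Fin m)) (T : ℕ) : Prop :=
  (∀ t < T, u t ∈ U) ∧ (∀ t ≤ T, traj f x0 u t ∈ X)

/-- `α : [0,∞) → [0,∞)` is of class `K∞`: continuous, strictly increasing, unbounded
and `α(0) = 0`. -/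
def KInf (α : ℝ → ℝ) : Prop :=
  ContinuousOn α (Set.Ici 0) ∧ StrictMonoOn α (Set.Ici 0) ∧ α 0 = 0 ∧
    (∀ r ∈ Set.Ici (0:ℝ), 0 ≤ α r) ∧ (∀ M : ℝ, ∃ r ∈ Set.Ici (0:ℝ), M < α r)

/-!
Shift the optimal control `u*` by one step and append, at the end of the horizon, the control
that assumption (a) provides at the terminal state `x*(T) ∈ X₀`. This control is admissible from
`x*(1) = f(x0, u*(0))` and keeps the terminal constraint, and its cost exceeds
`V_T^F(x0) - ℓ(x0, u*(0))` by `ℓ(x*(T), κ) + F(f(x*(T), κ)) - F(x*(T))`, which is at most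
`ℓ(xᵉ, uᵉ)` by (a).
-/

section Trajectory

variable {n m : ℕ}
  (f : EuclideanSpace ℝ (Fin n) → EuclideanSpace ℝ (Fin m) → EuclideanSpace ℝ (Fin n))

theorem traj_succ_eq_traj_tail (x : EuclideanSpace ℝ (Fin n))
    (u : ℕ → EuclideanSpace ℝ (Fin m)) (t : ℕ) :
    traj f x u (t + 1) = traj f (f x (u 0)) (fun s => u (s + 1)) t := by
  induction t with
  | zero => rfl
  | succ t ih => simp only [traj] at ih ⊢; rw [ih]

theorem traj_congr {x : EuclideanSpace ℝ (Fin n)} {u v : ℕ → EuclideanSpace ℝ (Fin m)}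
    {t : ℕ} (h : ∀ s < t, u s = v s) : traj f x u t = traj f x v t := by
  induction t with
  | zero => rfl
  | succ t ih =>
    simp only [traj]
    rw [ih fun s hs => h s (by omega), h t (by omega)]

def shiftAppend (u : ℕ → EuclideanSpace ℝ (Fin m)) (k : ℕ) (κ : EuclideanSpace ℝ (Fin m)) :
    ℕ → EuclideanSpace ℝ (Fin m) :=
  fun t => if t < k then u (t + 1) else κ

variable (x : EuclideanSpace ℝ (Fin n)) (u : ℕ → EuclideanSpace ℝ (Fin m)) (k : ℕ)
  (κ : EuclideanSpace ℝ (Fin m))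

theorem traj_shiftAppend {t : ℕ} (ht : t ≤ k) :
    traj f (f x (u 0)) (shiftAppend u k κ) t = traj f x u (t + 1) := by
  rw [traj_succ_eq_traj_tail]
  exact traj_congr f fun s hs => if_pos (by omega)

theorem traj_shiftAppend_succ :
    traj f (f x (u 0)) (shiftAppend u k κ) (k + 1) = f (traj f x u (k + 1)) κ := by
  rw [traj, traj_shiftAppend f x u k κ le_rfl, shiftAppend, if_neg (lt_irrefl k)]

theorem admissible_shiftAppend {X : Set (EuclideanSpace ℝ (Fin n))}
    {U : Set (EuclideanSpace ℝ (Fin m))} (hu : Admissible f X U x u (k + 1)) (hκ : κ ∈ U)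
    (hX : f (traj f x u (k + 1)) κ ∈ X) :
    Admissible f X U (f x (u 0)) (shiftAppend u k κ) (k + 1) := by
  refine ⟨fun t ht => ?_, fun t ht => ?_⟩
  · by_cases htk : t < k
    · rw [shiftAppend, if_pos htk]
      exact hu.1 (t + 1) (by omega)
    · rwa [shiftAppend, if_neg htk]
  · rcases Nat.lt_or_ge t (k + 1) with htk | htk
    · rw [traj_shiftAppend f x u k κ (by omega)]
      exact hu.2 (t + 1) (by omega)
    · rwa [show t = k + 1 by omega, traj_shiftAppend_succ]

theorem sum_stageCost_shiftAppend (ℓ : EuclideanSpace ℝ (Fin n) → EuclideanSpace ℝ (Fin m) → ℝ) :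
    ∑ t ∈ Finset.range (k + 1),
        ℓ (traj f (f x (u 0)) (shiftAppend u k κ) t) (shiftAppend u k κ t) + ℓ x (u 0) =
      ∑ t ∈ Finset.range (k + 1), ℓ (traj f x u t) (u t) + ℓ (traj f x u (k + 1)) κ := by
  have hshift : ∀ t ∈ Finset.range k,
      ℓ (traj f (f x (u 0)) (shiftAppend u k κ) t) (shiftAppend u k κ t) =
        ℓ (traj f x u (t + 1)) (u (t + 1)) := fun t ht => by
    have htk := Finset.mem_range.mp ht
    rw [traj_shiftAppend f x u k κ htk.le, shiftAppend, if_pos htk]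
  rw [Finset.sum_range_succ, Finset.sum_congr rfl hshift, traj_shiftAppend f x u k κ le_rfl,
    shiftAppend, if_neg (lt_irrefl k), Finset.sum_range_succ']
  simp only [traj]
  ring

end Trajectory

theorem mpc_lyapunov_decrease_general {n m : ℕ}
    (f : EuclideanSpace ℝ (Fin n) → EuclideanSpace ℝ (Fin m) → EuclideanSpace ℝ (Fin n))
    (X : Set (EuclideanSpace ℝ (Fin n))) (U : Set (EuclideanSpace ℝ (Fin m)))
    (ℓ : EuclideanSpace ℝ (Fin n) → EuclideanSpace ℝ (Fin m) → ℝ)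
    (xe : EuclideanSpace ℝ (Fin n)) (ue : EuclideanSpace ℝ (Fin m))
    (X0 : Set (EuclideanSpace ℝ (Fin n))) (hX0 : X0 ⊆ X)
    (F : EuclideanSpace ℝ (Fin n) → ℝ)
    (T : ℕ) (hT : 0 < T)
    (VTF : EuclideanSpace ℝ (Fin n) → EReal)
    (hVTF : ∀ y, VTF y = sInf {c : EReal | ∃ u, Admissible f X U y u T ∧
      traj f y u T ∈ X0 ∧
      c = (((∑ t ∈ Finset.range T, ℓ (traj f y u t) (u t)) + F (traj f y u T) : ℝ) : EReal)})
    -- (a) terminal cost compatibility on the terminal constraint set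
    (hterm : ∀ x ∈ X0, ∃ u ∈ U, f x u ∈ X0 ∧ F (f x u) ≤ F x - ℓ x u + ℓ xe ue)
    -- (b) an optimal control `u*` for `x0` exists ...
    (x0 : EuclideanSpace ℝ (Fin n))
    (ustar : ℕ → EuclideanSpace ℝ (Fin m))
    (hadm : Admissible f X U x0 ustar T)
    (hterm' : traj f x0 ustar T ∈ X0)
    (hopt : (((∑ t ∈ Finset.range T, ℓ (traj f x0 ustar t) (ustar t)) +
      F (traj f x0 ustar T) : ℝ) : EReal) = VTF x0) :
    VTF (f x0 (ustar 0)) ≤ VTF x0 - ((ℓ x0 (ustar 0) : ℝ) : EReal) + ((ℓ xe ue : ℝ) : EReal) := by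
  obtain ⟨k, rfl⟩ : ∃ k, T = k + 1 := ⟨T - 1, by omega⟩
  obtain ⟨κ, hκU, hκX0, hκF⟩ := hterm _ hterm'
  have hterminal := traj_shiftAppend_succ f x0 ustar k κ
  have hcost := sum_stageCost_shiftAppend f x0 ustar k κ ℓ
  have hfeasible : VTF (f x0 (ustar 0)) ≤ ((∑ t ∈ Finset.range (k + 1),
      ℓ (traj f (f x0 (ustar 0)) (shiftAppend ustar k κ) t) (shiftAppend ustar k κ t) +
        F (traj f (f x0 (ustar 0)) (shiftAppend ustar k κ) (k + 1)) : ℝ) : EReal) := by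
    rw [hVTF]
    exact sInf_le ⟨shiftAppend ustar k κ,
      admissible_shiftAppend f x0 ustar k κ hadm hκU (hX0 hκX0), hterminal ▸ hκX0, rfl⟩
  rw [← hopt, ← EReal.coe_sub, ← EReal.coe_add]
  refine hfeasible.trans (EReal.coe_le_coe_iff.mpr ?_)
  rw [hterminal]
  linarith

/-- MPC Lyapunov decrease with terminal conditions: under the terminal-cost compatibility
condition on `X₀`, the optimal value function of the terminal-constrained problem decreases
along the MPC closed loop: `V_T^F(f(x0,u*(0))) ≤ V_T^F(x0) − ℓ(x0,u*(0)) + ℓ(xᵉ,uᵉ)`. -/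
theorem mpc_lyapunov_decrease {n m : ℕ}
    (f : EuclideanSpace ℝ (Fin n) → EuclideanSpace ℝ (Fin m) → EuclideanSpace ℝ (Fin n))
    (X : Set (EuclideanSpace ℝ (Fin n))) (U : Set (EuclideanSpace ℝ (Fin m)))
    (ℓ : EuclideanSpace ℝ (Fin n) → EuclideanSpace ℝ (Fin m) → ℝ)
    (xe : EuclideanSpace ℝ (Fin n)) (ue : EuclideanSpace ℝ (Fin m))
    (hxe : xe ∈ X) (hue : ue ∈ U) (heq : f xe ue = xe)
    (X0 : Set (EuclideanSpace ℝ (Fin n))) (hX0 : X0 ⊆ X)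
    (F : EuclideanSpace ℝ (Fin n) → ℝ)
    (T : ℕ) (hT : 0 < T)
    (VTF : EuclideanSpace ℝ (Fin n) → EReal)
    (hVTF : ∀ y, VTF y = sInf {c : EReal | ∃ u, Admissible f X U y u T ∧
      traj f y u T ∈ X0 ∧
      c = (((∑ t ∈ Finset.range T, ℓ (traj f y u t) (u t)) + F (traj f y u T) : ℝ) : EReal)})
    -- (a) terminal cost compatibility on the terminal constraint set
    (hterm : ∀ x ∈ X0, ∃ u ∈ U, f x u ∈ X0 ∧ F (f x u) ≤ F x - ℓ x u + ℓ xe ue)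
    -- (b) an optimal control `u*` for `x0` exists ...
    (x0 : EuclideanSpace ℝ (Fin n)) (hx0 : x0 ∈ X)
    (ustar : ℕ → EuclideanSpace ℝ (Fin m))
    (hadm : Admissible f X U x0 ustar T)
    (hterm' : traj f x0 ustar T ∈ X0)
    (hopt : (((∑ t ∈ Finset.range T, ℓ (traj f x0 ustar t) (ustar t)) +
      F (traj f x0 ustar T) : ℝ) : EReal) = VTF x0)
    -- ... and the infimum defining `V_T^F(f(x0,u*(0)))` is over a nonempty set
    (hne : ∃ u, Admissible f X U (f x0 (ustar 0)) u T ∧ traj f (f x0 (ustar 0)) u T ∈ X0) :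
    VTF (f x0 (ustar 0)) ≤ VTF x0 - ((ℓ x0 (ustar 0) : ℝ) : EReal) + ((ℓ xe ue : ℝ) : EReal) :=
  mpc_lyapunov_decrease_general f X U ℓ xe ue X0 hX0 F T hT VTF hVTF hterm x0 ustar hadm hterm' hopt
end

section
/- (Loss of strict dissipativity without state constraints.) Consider the scalar discrete-time system x⁺ = 2x + u with state set X = ℝ, control set U = [−3,3], stage cost ℓ(x,u) = u², and equilibrium (x^e,u^e) = (0,0). Then there do not exist a function λ : ℝ → ℝ bounded from below and α ∈ K∞ such that λ(2x + u) ≤ λ(x) + u² − α(|x|) for all x ∈ ℝ and u ∈ [−3,3]; i.e., the problem on the unbounded state set X = ℝ is not strictly dissipative with supply rate ℓ(x,u) − ℓ(x^e,u^e) = u². -/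
namespace KInf

variable {α : ℝ → ℝ}

theorem le_of_le (hα : KInf α) {r s : ℝ} (hr : 0 ≤ r) (hrs : r ≤ s) : α r ≤ α s :=
  hα.2.1.monotoneOn hr (hr.trans hrs) hrs

theorem pos (hα : KInf α) {r : ℝ} (hr : 0 < r) : 0 < α r := by
  have h := hα.2.1 Set.self_mem_Ici (Set.mem_Ici.2 hr.le) hr
  rwa [hα.2.2.1] at h

end KInf

theorem le_sub_mul_of_succ_le_sub {f : ℕ → ℝ} {c : ℝ} (h : ∀ n, f (n + 1) ≤ f n - c)
    (n : ℕ) : f n ≤ f 0 - n * c := by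
  induction n with
  | zero => simp
  | succ n ih =>
    push_cast
    linarith [h n]

theorem not_bddBelow_range_of_succ_le_sub {f : ℕ → ℝ} {c : ℝ} (hc : 0 < c)
    (h : ∀ n, f (n + 1) ≤ f n - c) : ¬ BddBelow (Set.range f) := by
  rintro ⟨B, hB⟩
  obtain ⟨n, hn⟩ := exists_nat_gt ((f 0 - B) / c)
  rw [div_lt_iff₀ hc] at hn
  linarith [hB ⟨n, rfl⟩, le_sub_mul_of_succ_le_sub h n]

/-- Loss of strict dissipativity without state constraints: the scalar system `x⁺ = 2x + u`
with `X = ℝ`, `U = [−3,3]`, stage cost `ℓ(x,u) = u²` and equilibrium `(0,0)` is not strictly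
dissipative: there is no storage function `λ` bounded from below and `α ∈ K∞` with
`λ(2x + u) ≤ λ(x) + u² − α(|x|)` for all `x ∈ ℝ`, `u ∈ [−3,3]`. -/
theorem no_strict_dissipativity_unbounded_state_set :
    ¬ ∃ (lam : ℝ → ℝ) (B : ℝ) (α : ℝ → ℝ),
      (∀ x : ℝ, B ≤ lam x) ∧ KInf α ∧
      (∀ x : ℝ, ∀ u ∈ Set.Icc (-3 : ℝ) 3,
        lam (2 * x + u) ≤ lam x + u ^ 2 - α |x|) := by
  rintro ⟨lam, B, α, hB, hα, hdiss⟩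
  have hdouble : ∀ n : ℕ, lam (2 ^ (n + 1)) ≤ lam (2 ^ n) - α 1 := fun n => by
    have hpow : (1 : ℝ) ≤ 2 ^ n := one_le_pow₀ one_le_two
    have hα_le : α 1 ≤ α |2 ^ n| := by
      rw [abs_of_pos (by positivity)]
      exact hα.le_of_le zero_le_one hpow
    calc lam (2 ^ (n + 1)) = lam (2 * 2 ^ n + 0) := by ring_nf
      _ ≤ lam (2 ^ n) + 0 ^ 2 - α |2 ^ n| := hdiss _ 0 ⟨by norm_num, by norm_num⟩
      _ ≤ lam (2 ^ n) - α 1 := by linarith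
  exact not_bddBelow_range_of_succ_le_sub (f := fun n ↦ lam (2 ^ n)) (hα.pos one_pos) hdouble
    ⟨B, by rintro _ ⟨n, rfl⟩; exact hB _⟩
end
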